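/- Let f* be an optimal randomized prediction rule for the ERMI-constrained fair classification problem: f* satisfies ρ_E(Ŷ, S) ≤ ε and its risk E[1{Ŷ ≠ Y}] is minimal among all randomized prediction rules Q_{Ŷ|X,S} satisfying ρ_E(Ŷ, S) ≤ ε. Suppose Y = h(X, S) for a deterministic function h : 𝒳 × 𝒮 → 𝒴, and s_max ∈ 𝒮 satisfies P_S(s_max) = 1/2 + δ for some δ > 0. Define u(ε) = max{ε, √ε}. Then for the prediction variable Ŷ induced by f*: E_{s∼P_S}[ TV(P_{Ŷ|S=s}, P_{Y|S=s_max}) ] ≤ (1/2 + 1/(4δ)) · u(ε). -/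

import Mathlib

open Finset

noncomputable section

variable {𝒳 𝒴 𝒮 : Type*} [Fintype 𝒳] [Fintype 𝒴] [Fintype 𝒮] [DecidableEq 𝒴]

/-- Total variation distance between two finitely supported distributions on `𝒴`,
`TV(p, q) = (1/2) ∑ y, |p y - q y|`. -/
def TV (p q : 𝒴 → ℝ) : ℝ := (1 / 2) * ∑ y, |p y - q y|

/-- Marginal distribution of the sensitive attribute `S` under the joint `P` of `(X, Y, S)`. -/
def margS (P : 𝒳 → 𝒴 → 𝒮 → ℝ) (s : 𝒮) : ℝ := ∑ x, ∑ y, P x y s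

/-- Conditional distribution of the label `Y` given `S = s`. -/
def condYS (P : 𝒳 → 𝒴 → 𝒮 → ℝ) (s : 𝒮) (y : 𝒴) : ℝ := (∑ x, P x y s) / margS P s

/-- A randomized prediction rule `Q`: for every `(x, s)`, `Q x s` is a probability
distribution on labels. -/
def IsRule (Q : 𝒳 → 𝒮 → 𝒴 → ℝ) : Prop :=
  (∀ x s y, 0 ≤ Q x s y) ∧ ∀ x s, ∑ y, Q x s y = 1

/-- The risk `E[1{Ŷ ≠ Y}]` of the rule `Q` under the joint distribution induced by `P` and
`Q` (in which `Ŷ` is conditionally independent of `Y` given `(X, S)`). -/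
def risk (P : 𝒳 → 𝒴 → 𝒮 → ℝ) (Q : 𝒳 → 𝒮 → 𝒴 → ℝ) : ℝ :=
  ∑ x, ∑ y, ∑ s, ∑ yh, P x y s * Q x s yh * (if yh = y then (0 : ℝ) else 1)

/-- Joint distribution of `(Ŷ, S)` induced by `P` and the rule `Q`. -/
def jointYhatS (P : 𝒳 → 𝒴 → 𝒮 → ℝ) (Q : 𝒳 → 𝒮 → 𝒴 → ℝ) (yh : 𝒴) (s : 𝒮) : ℝ :=
  ∑ x, ∑ y, P x y s * Q x s yh

/-- Marginal distribution of the prediction `Ŷ`. -/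
def margYhat (P : 𝒳 → 𝒴 → 𝒮 → ℝ) (Q : 𝒳 → 𝒮 → 𝒴 → ℝ) (yh : 𝒴) : ℝ :=
  ∑ s, jointYhatS P Q yh s

/-- Conditional distribution of the prediction `Ŷ` given `S = s`. -/
def condYhatS (P : 𝒳 → 𝒴 → 𝒮 → ℝ) (Q : 𝒳 → 𝒮 → 𝒴 → ℝ) (s : 𝒮) (yh : 𝒴) : ℝ :=
  jointYhatS P Q yh s / margS P s

/-- Exponential Rényi mutual information (χ²-divergence between the joint distribution of
`(Ŷ, S)` and the product of its marginals), summed over pairs with positive product of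
marginals. -/
def ERMI (P : 𝒳 → 𝒴 → 𝒮 → ℝ) (Q : 𝒳 → 𝒮 → 𝒴 → ℝ) : ℝ :=
  ∑ yh, ∑ s,
    if 0 < margYhat P Q yh * margS P s then
      (jointYhatS P Q yh s - margYhat P Q yh * margS P s) ^ 2 /
        (margYhat P Q yh * margS P s)
    else 0

/-! The fairness constraint bounds, by Cauchy–Schwarz, the average distance between the laws
`P_{Ŷ|S=s}` and the prediction marginal `P_Ŷ` by `√ε / 2`. Since `Y = h(X, S)`, predicting through
a maximal coupling of `P_{Y|S=s}` with `P_{Y|S=s_max}` is exactly fair and has risk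
`E_s TV(P_{Y|S=s_max}, P_{Y|S=s})`, so optimality caps the risk of `f*`, which itself dominates
`E_s TV(P_{Ŷ|S=s}, P_{Y|S=s})`. Comparing the two averages by triangle inequalities through `P_Ŷ`,
the group `s_max`, of weight `1/2 + δ`, outweighs all the others together, which forces
`2δ · TV(P_Ŷ, P_{Y|S=s_max}) ≤ √ε / 2`. -/

section General

variable {α : Type*} [Fintype α]

lemma sum_mul_div_sum_self {f : α → ℝ} (hf : ∀ i, 0 ≤ f i) (i : α) :
    (∑ j, f j) * (f i / ∑ j, f j) = f i := by
  by_cases h : ∑ j, f j = 0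
  · rw [h, zero_mul]
    exact ((sum_eq_zero_iff_of_nonneg fun j _ => hf j).1 h i (mem_univ i)).symm
  · exact mul_div_cancel₀ _ h

lemma TV_self (p : α → ℝ) : TV p p = 0 := by simp [TV]

lemma TV_comm (p q : α → ℝ) : TV p q = TV q p := by simp only [TV, abs_sub_comm]

lemma TV_triangle (p q r : α → ℝ) : TV p r ≤ TV p q + TV q r := by
  simp only [TV, ← mul_add, ← sum_add_distrib]
  gcongr with y
  exact abs_sub_le _ _ _

lemma mul_TV_div (p q : α → ℝ) {c : ℝ} (hc : 0 < c) :
    c * TV (fun y => p y / c) (fun y => q y / c) = TV p q := by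
  simp only [TV, ← sub_div, abs_div, abs_of_pos hc, ← sum_div]
  field_simp

lemma TV_eq_sum_sub_sum_min {p q : α → ℝ} (h : ∑ y, p y = ∑ y, q y) :
    TV p q = ∑ y, p y - ∑ y, min (p y) (q y) := by
  have key : ∀ y, |p y - q y| = p y + q y - 2 * min (p y) (q y) := fun y => by
    rcases le_total (p y) (q y) with hle | hle
    · rw [abs_of_nonpos (by linarith), min_eq_left hle]; ring
    · rw [abs_of_nonneg (by linarith), min_eq_right hle]; ring
  simp only [TV, key, sum_sub_distrib, sum_add_distrib, ← mul_sum, ← h]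
  ring

lemma sum_abs_sub_le_sqrt_chiSq {a b : α → ℝ} (hb : b ∈ stdSimplex ℝ α)
    (hab : ∀ i, b i = 0 → a i = 0) :
    ∑ i, |a i - b i| ≤ √(∑ i, if 0 < b i then (a i - b i) ^ 2 / b i else 0) := by
  have hcs := sum_sq_le_sum_mul_sum_of_sq_le_mul univ (r := fun i => |a i - b i|)
    (f := fun i => if 0 < b i then (a i - b i) ^ 2 / b i else 0) (g := b)
    (fun i _ => by split_ifs <;> positivity) (fun i _ => hb.1 i) fun i _ => by
      split_ifs with hpos
      · rw [sq_abs, div_mul_cancel₀ _ hpos.ne']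
      · have hb0 : b i = 0 := le_antisymm (not_lt.1 hpos) (hb.1 i)
        simp [hb0, hab i hb0]
  rw [hb.2, mul_one] at hcs
  exact (le_abs_self _).trans (Real.abs_le_sqrt hcs)

end General

section Coupling

variable {α : Type*} [Fintype α] {a b : α → ℝ}

lemma sum_sub_min_eq (ha : a ∈ stdSimplex ℝ α) (hb : b ∈ stdSimplex ℝ α) :
    ∑ z, (a z - min (a z) (b z)) = ∑ z, (b z - min (a z) (b z)) := by
  rw [sum_sub_distrib, sum_sub_distrib, ha.2, hb.2]

variable [DecidableEq α]

/-- A maximal coupling of `a` and `b`, as a Markov kernel: from `y₀ ∼ a`, keep `y₀` with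
probability `min (a y₀) (b y₀) / a y₀`, and otherwise draw from the normalised excess of `b`
over `a`. -/
def couplingKernel (a b : α → ℝ) (y₀ y : α) : ℝ :=
  if a y₀ = 0 then b y
  else ((if y = y₀ then min (a y₀) (b y₀) else 0)
    + (a y₀ - min (a y₀) (b y₀)) * ((b y - min (a y) (b y)) / ∑ z, (b z - min (a z) (b z))))
      / a y₀

lemma mul_couplingKernel (hb : ∀ y, 0 ≤ b y) (y₀ y : α) :
    a y₀ * couplingKernel a b y₀ y = (if y = y₀ then min (a y₀) (b y₀) else 0)
      + (a y₀ - min (a y₀) (b y₀)) * ((b y - min (a y) (b y)) / ∑ z, (b z - min (a z) (b z))) := by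
  by_cases ha : a y₀ = 0
  · simp [ha, min_eq_left (hb y₀)]
  · rw [couplingKernel, if_neg ha, mul_div_cancel₀ _ ha]

lemma couplingKernel_mem_stdSimplex (ha : a ∈ stdSimplex ℝ α) (hb : b ∈ stdSimplex ℝ α)
    (y₀ : α) : couplingKernel a b y₀ ∈ stdSimplex ℝ α := by
  by_cases ha0 : a y₀ = 0
  · rwa [show couplingKernel a b y₀ = b from funext fun y => if_pos ha0]
  have hpos : 0 < a y₀ := lt_of_le_of_ne (ha.1 y₀) (Ne.symm ha0)
  have hexcess : ∀ z, 0 ≤ b z - min (a z) (b z) := fun z => sub_nonneg.2 (min_le_right _ _)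
  refine ⟨fun y => ?_, ?_⟩
  · rw [couplingKernel, if_neg ha0]
    refine div_nonneg (add_nonneg ?_ (mul_nonneg ?_ (div_nonneg (hexcess y)
      (sum_nonneg fun z _ => hexcess z)))) hpos.le
    · split_ifs
      exacts [le_min (ha.1 y₀) (hb.1 y₀), le_rfl]
    · exact sub_nonneg.2 (min_le_left _ _)
  · have hstay : (a y₀ - min (a y₀) (b y₀)) *
        ((∑ z, (b z - min (a z) (b z))) / ∑ z, (b z - min (a z) (b z)))
        = a y₀ - min (a y₀) (b y₀) := by
      rw [← sum_sub_min_eq ha hb]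
      convert sum_mul_div_sum_self (fun z => sub_nonneg.2 (min_le_left (a z) (b z))) y₀ using 1
      ring
    simp only [couplingKernel, if_neg ha0, ← sum_div, sum_add_distrib, sum_ite_eq', mem_univ,
      if_true, ← mul_sum, ← sum_div, hstay]
    field_simp
    ring

lemma sum_mul_couplingKernel (ha : a ∈ stdSimplex ℝ α) (hb : b ∈ stdSimplex ℝ α) (y : α) :
    ∑ y₀, a y₀ * couplingKernel a b y₀ y = b y := by
  simp only [mul_couplingKernel hb.1, sum_add_distrib, sum_ite_eq, mem_univ, if_true, ← sum_mul,
    sum_sub_min_eq ha hb, sum_mul_div_sum_self fun z => sub_nonneg.2 (min_le_right (a z) _)]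
  ring

lemma min_le_mul_couplingKernel_self (hb : ∀ y, 0 ≤ b y) (y : α) :
    min (a y) (b y) ≤ a y * couplingKernel a b y y := by
  rw [mul_couplingKernel hb, if_pos rfl, le_add_iff_nonneg_right]
  exact mul_nonneg (sub_nonneg.2 (min_le_left _ _)) (div_nonneg
    (sub_nonneg.2 (min_le_right _ _)) (sum_nonneg fun z _ => sub_nonneg.2 (min_le_right _ _)))

end Coupling

section Weighted

variable {ι α : Type*} [Fintype ι] [Fintype α] {w : ι → ℝ}

lemma sum_mul_TV_le_sum_mul_TV_add (hw0 : ∀ i, 0 ≤ w i) (hw1 : ∑ i, w i = 1)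
    (r : ι → α → ℝ) (m q : α → ℝ) :
    ∑ i, w i * TV (r i) q ≤ ∑ i, w i * TV (r i) m + TV m q := by
  calc ∑ i, w i * TV (r i) q ≤ ∑ i, w i * (TV (r i) m + TV m q) :=
        sum_le_sum fun i _ => mul_le_mul_of_nonneg_left (TV_triangle _ _ _) (hw0 i)
    _ = ∑ i, w i * TV (r i) m + TV m q := by
        simp only [mul_add, sum_add_distrib, ← sum_mul, hw1, one_mul]

/-- By the triangle inequality through `m`, the index `i₀` contributes `+ TV m (q i₀)` and every
other index at worst `- TV m (q i₀)`. -/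
lemma two_mul_sub_one_mul_TV_le (hw0 : ∀ i, 0 ≤ w i) (hw1 : ∑ i, w i = 1)
    (i₀ : ι) (q r : ι → α → ℝ) (m : α → ℝ) :
    (2 * w i₀ - 1) * TV m (q i₀)
      ≤ ∑ i, w i * TV (r i) (q i) - ∑ i, w i * TV (q i₀) (q i) + ∑ i, w i * TV (r i) m := by
  classical
  set T := TV m (q i₀)
  have hterm : ∀ i, w i * (TV (q i₀) (q i) - TV (r i) m - T) + (if i = i₀ then 2 * w i * T else 0)
      ≤ w i * TV (r i) (q i) := fun i => by
    split_ifs with hi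
    · subst hi
      calc _ = w i * (T - TV (r i) m) := by rw [TV_self]; ring
        _ ≤ w i * TV (r i) (q i) := mul_le_mul_of_nonneg_left
          (by linarith [TV_triangle m (r i) (q i), TV_comm m (r i)]) (hw0 i)
    · have h₁ := TV_triangle (q i₀) (r i) (q i)
      have h₂ := TV_triangle (q i₀) m (r i)
      rw [add_zero]
      exact mul_le_mul_of_nonneg_left (by linarith [TV_comm (q i₀) m, TV_comm m (r i)]) (hw0 i)
  have := sum_le_sum fun i (_ : i ∈ univ) => hterm i
  simp only [sum_add_distrib, mul_sub, sum_sub_distrib, ← sum_mul, hw1, sum_ite_eq', mem_univ,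
    if_true] at this
  linarith

end Weighted

section Model

variable {P : 𝒳 → 𝒴 → 𝒮 → ℝ} {Q : 𝒳 → 𝒮 → 𝒴 → ℝ}

omit [DecidableEq 𝒴] in
lemma sum_margS (hP1 : ∑ x, ∑ y, ∑ s, P x y s = 1) : ∑ s, margS P s = 1 := by
  simp only [margS]
  rw [← hP1, sum_comm]
  exact sum_congr rfl fun x _ => sum_comm

omit [Fintype 𝒮] [DecidableEq 𝒴] in
lemma margS_mul_condYS {s : 𝒮} (hS : 0 < margS P s) (y : 𝒴) :
    margS P s * condYS P s y = ∑ x, P x y s :=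
  mul_div_cancel₀ _ hS.ne'

omit [Fintype 𝒮] [DecidableEq 𝒴] in
lemma condYS_mem_stdSimplex (hP0 : ∀ x y s, 0 ≤ P x y s) {s : 𝒮} (hS : 0 < margS P s) :
    condYS P s ∈ stdSimplex ℝ 𝒴 := by
  refine ⟨fun y => div_nonneg (sum_nonneg fun x _ => hP0 x y s) hS.le, ?_⟩
  simp only [condYS]
  rw [← sum_div, sum_comm]
  exact div_self hS.ne'

omit [Fintype 𝒮] [DecidableEq 𝒴] in
lemma jointYhatS_nonneg (hP0 : ∀ x y s, 0 ≤ P x y s) (hQ : IsRule Q) (yh : 𝒴) (s : 𝒮) :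
    0 ≤ jointYhatS P Q yh s :=
  sum_nonneg fun x _ => sum_nonneg fun y _ => mul_nonneg (hP0 x y s) (hQ.1 x s yh)

omit [DecidableEq 𝒴] in
lemma jointYhatS_le_margYhat (hP0 : ∀ x y s, 0 ≤ P x y s) (hQ : IsRule Q) (yh : 𝒴) (s : 𝒮) :
    jointYhatS P Q yh s ≤ margYhat P Q yh :=
  single_le_sum (f := jointYhatS P Q yh) (fun s _ => jointYhatS_nonneg hP0 hQ yh s) (mem_univ s)

omit [Fintype 𝒮] [DecidableEq 𝒴] in
lemma sum_jointYhatS (hQ : IsRule Q) (s : 𝒮) : ∑ yh, jointYhatS P Q yh s = margS P s := by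
  simp only [jointYhatS, margS]
  rw [sum_comm]
  refine sum_congr rfl fun x _ => ?_
  rw [sum_comm]
  simp only [← mul_sum, hQ.2 x s, mul_one]

omit [DecidableEq 𝒴] in
lemma sum_margYhat (hP1 : ∑ x, ∑ y, ∑ s, P x y s = 1) (hQ : IsRule Q) :
    ∑ yh, margYhat P Q yh = 1 := by
  simp only [margYhat]
  rw [sum_comm]
  simp only [sum_jointYhatS hQ, sum_margS hP1]

omit [DecidableEq 𝒴] in
lemma ERMI_nonneg (P : 𝒳 → 𝒴 → 𝒮 → ℝ) (Q : 𝒳 → 𝒮 → 𝒴 → ℝ) : 0 ≤ ERMI P Q :=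
  sum_nonneg fun _ _ => sum_nonneg fun _ _ => by split_ifs <;> positivity

lemma risk_eq (hQ : IsRule Q) : risk P Q = ∑ s, ∑ y, ∑ x, P x y s * (1 - Q x s y) := by
  have hterm : ∀ x y s, ∑ yh, P x y s * Q x s yh * (if yh = y then (0 : ℝ) else 1)
      = P x y s * (1 - Q x s y) := by
    intro x y s
    simp only [mul_ite, mul_zero, mul_one, sum_ite, filter_eq', filter_ne', mem_univ, if_true,
      sum_const_zero, zero_add]
    rw [sum_erase_eq_sub (mem_univ y), ← mul_sum, hQ.2 x s]
    ring
  simp only [risk, hterm]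
  rw [sum_comm]
  exact (sum_congr rfl fun y _ => sum_comm).trans sum_comm

omit [DecidableEq 𝒴] in
lemma sum_margS_mul_TV_condYhatS_margYhat_le (hP0 : ∀ x y s, 0 ≤ P x y s)
    (hP1 : ∑ x, ∑ y, ∑ s, P x y s = 1) (hS : ∀ s, 0 < margS P s) (hQ : IsRule Q) :
    ∑ s, margS P s * TV (condYhatS P Q s) (margYhat P Q) ≤ √(ERMI P Q) / 2 := by
  have hTV : ∀ s, margS P s * TV (condYhatS P Q s) (margYhat P Q)
      = TV (jointYhatS P Q · s) (fun yh => margYhat P Q yh * margS P s) := fun s => by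
    have h := mul_TV_div (jointYhatS P Q · s) (fun yh => margYhat P Q yh * margS P s) (hS s)
    simp only [mul_div_cancel_right₀ _ (hS s).ne'] at h
    exact h
  have hprod : (fun p : 𝒴 × 𝒮 => margYhat P Q p.1 * margS P p.2) ∈ stdSimplex ℝ (𝒴 × 𝒮) :=
    ⟨fun p => mul_nonneg (sum_nonneg fun s _ => jointYhatS_nonneg hP0 hQ p.1 s) (hS p.2).le, by
      rw [Fintype.sum_prod_type, ← sum_mul_sum, sum_margYhat hP1 hQ, sum_margS hP1, one_mul]⟩
  have hsupp : ∀ p : 𝒴 × 𝒮, margYhat P Q p.1 * margS P p.2 = 0 → jointYhatS P Q p.1 p.2 = 0 :=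
    fun p hp => by
      have hm : margYhat P Q p.1 = 0 := (mul_eq_zero.1 hp).resolve_right (hS p.2).ne'
      exact le_antisymm (hm ▸ jointYhatS_le_margYhat hP0 hQ p.1 p.2)
        (jointYhatS_nonneg hP0 hQ p.1 p.2)
  have hCS := sum_abs_sub_le_sqrt_chiSq hprod hsupp
  simp only [Fintype.sum_prod_type] at hCS
  rw [sum_congr rfl fun s _ => hTV s]
  simp only [TV]
  rw [← mul_sum, sum_comm, ERMI]
  linarith

lemma sum_margS_mul_TV_condYhatS_condYS_le_risk (hP0 : ∀ x y s, 0 ≤ P x y s)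
    (hS : ∀ s, 0 < margS P s) (hQ : IsRule Q) :
    ∑ s, margS P s * TV (condYhatS P Q s) (condYS P s) ≤ risk P Q := by
  rw [risk_eq hQ]
  refine sum_le_sum fun s _ => ?_
  have hscale : margS P s * TV (condYhatS P Q s) (condYS P s)
      = TV (jointYhatS P Q · s) (fun y => ∑ x, P x y s) :=
    mul_TV_div _ (fun y => ∑ x, P x y s) (hS s)
  have hsum : ∑ y, jointYhatS P Q y s = ∑ y, ∑ x, P x y s := by
    rw [sum_jointYhatS hQ, margS, sum_comm]
  -- the mass predicted correctly is counted both in the prediction and in the label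
  have hcorrect : ∀ y, ∑ x, P x y s * Q x s y ≤ min (jointYhatS P Q y s) (∑ x, P x y s) :=
    fun y => le_min
      (sum_le_sum fun x _ => single_le_sum (f := fun y' => P x y' s * Q x s y)
        (fun y' _ => mul_nonneg (hP0 x y' s) (hQ.1 x s y)) (mem_univ y))
      (sum_le_sum fun x _ => mul_le_of_le_one_right (hP0 x y s)
        (single_le_sum (fun y' _ => hQ.1 x s y') (mem_univ y) |>.trans_eq (hQ.2 x s)))
  rw [hscale, TV_eq_sum_sub_sum_min hsum, hsum]
  simp only [mul_sub, mul_one, sum_sub_distrib]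
  linarith [sum_le_sum fun y (_ : y ∈ univ) => hcorrect y]

/-- Transports the label law of each group `s` onto that of `s₀` along `couplingKernel`; since
`Y = h(X, S)`, the kernel can be fed the true label. -/
def couplingRule (P : 𝒳 → 𝒴 → 𝒮 → ℝ) (h : 𝒳 → 𝒮 → 𝒴) (s₀ : 𝒮) : 𝒳 → 𝒮 → 𝒴 → ℝ :=
  fun x s => couplingKernel (condYS P s) (condYS P s₀) (h x s)

variable {h : 𝒳 → 𝒮 → 𝒴} {s₀ : 𝒮}

omit [Fintype 𝒮] in
lemma isRule_couplingRule (hP0 : ∀ x y s, 0 ≤ P x y s) (hS : ∀ s, 0 < margS P s) :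
    IsRule (couplingRule P h s₀) := by
  have hK := fun x s => couplingKernel_mem_stdSimplex (condYS_mem_stdSimplex hP0 (hS s))
    (condYS_mem_stdSimplex hP0 (hS s₀)) (h x s)
  exact ⟨fun x s => (hK x s).1, fun x s => (hK x s).2⟩

omit [Fintype 𝒮] in
lemma sum_mul_couplingRule (hdet : ∀ x y s, y ≠ h x s → P x y s = 0) (y yh : 𝒴) (s : 𝒮) :
    ∑ x, P x y s * couplingRule P h s₀ x s yh
      = (∑ x, P x y s) * couplingKernel (condYS P s) (condYS P s₀) y yh := by
  rw [sum_mul]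
  refine sum_congr rfl fun x _ => ?_
  rcases eq_or_ne y (h x s) with rfl | hy
  · rfl
  · simp [hdet x y s hy]

omit [Fintype 𝒮] in
lemma jointYhatS_couplingRule (hP0 : ∀ x y s, 0 ≤ P x y s) (hS : ∀ s, 0 < margS P s)
    (hdet : ∀ x y s, y ≠ h x s → P x y s = 0) (yh : 𝒴) (s : 𝒮) :
    jointYhatS P (couplingRule P h s₀) yh s = margS P s * condYS P s₀ yh := by
  rw [jointYhatS, sum_comm]
  simp only [sum_mul_couplingRule hdet, ← margS_mul_condYS (hS s), mul_assoc, ← mul_sum]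
  rw [sum_mul_couplingKernel (condYS_mem_stdSimplex hP0 (hS s))
    (condYS_mem_stdSimplex hP0 (hS s₀))]

lemma ERMI_couplingRule (hP0 : ∀ x y s, 0 ≤ P x y s) (hP1 : ∑ x, ∑ y, ∑ s, P x y s = 1)
    (hS : ∀ s, 0 < margS P s) (hdet : ∀ x y s, y ≠ h x s → P x y s = 0) :
    ERMI P (couplingRule P h s₀) = 0 := by
  have hmarg : ∀ yh, margYhat P (couplingRule P h s₀) yh = condYS P s₀ yh := fun yh => by
    simp only [margYhat, jointYhatS_couplingRule hP0 hS hdet, ← sum_mul, sum_margS hP1, one_mul]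
  refine sum_eq_zero fun yh _ => sum_eq_zero fun s _ => ?_
  simp [jointYhatS_couplingRule hP0 hS hdet, hmarg, mul_comm]

lemma risk_couplingRule_le (hP0 : ∀ x y s, 0 ≤ P x y s) (hS : ∀ s, 0 < margS P s)
    (hdet : ∀ x y s, y ≠ h x s → P x y s = 0) :
    risk P (couplingRule P h s₀) ≤ ∑ s, margS P s * TV (condYS P s₀) (condYS P s) := by
  rw [risk_eq (isRule_couplingRule hP0 hS)]
  refine sum_le_sum fun s _ => ?_
  have hq := condYS_mem_stdSimplex hP0 (hS s)
  have hkeep : ∀ y, ∑ x, P x y s * (1 - couplingRule P h s₀ x s y)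
      ≤ margS P s * (condYS P s y - min (condYS P s y) (condYS P s₀ y)) := fun y => by
    simp only [mul_sub, mul_one, sum_sub_distrib, sum_mul_couplingRule hdet,
      ← margS_mul_condYS (hS s), mul_assoc]
    gcongr
    · exact (hS s).le
    · exact min_le_mul_couplingKernel_self (condYS_mem_stdSimplex hP0 (hS s₀)).1 y
  rw [TV_comm, TV_eq_sum_sub_sum_min (hq.2.trans (condYS_mem_stdSimplex hP0 (hS s₀)).2.symm)]
  refine (sum_le_sum fun y _ => hkeep y).trans_eq ?_
  rw [← mul_sum, sum_sub_distrib]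

end Model

/-- **Theorem 2 (ERMI case).** If `Y = h(X, S)` is deterministic, `P_S(s_max) = 1/2 + δ`
with `δ > 0`, `u(ε) = max{ε, √ε}`, and `Q` is an optimal randomized prediction rule among
those with `ρ_E(Ŷ, S) ≤ ε`, then
`E_{s∼P_S}[TV(P_{Ŷ|S=s}, P_{Y|S=s_max})] ≤ (1/2 + 1/(4δ)) u(ε)`. -/
theorem ermi_fair_optimal_inductive_bias
    (P : 𝒳 → 𝒴 → 𝒮 → ℝ)
    (hP0 : ∀ x y s, 0 ≤ P x y s)
    (hP1 : ∑ x, ∑ y, ∑ s, P x y s = 1)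
    (hS : ∀ s, 0 < margS P s)
    (h : 𝒳 → 𝒮 → 𝒴) (hdet : ∀ x y s, y ≠ h x s → P x y s = 0)
    (smax : 𝒮) (δ : ℝ) (hδ : 0 < δ) (hsmax : margS P smax = 1 / 2 + δ)
    (ε : ℝ)
    (Q : 𝒳 → 𝒮 → 𝒴 → ℝ) (hQ : IsRule Q)
    (hfair : ERMI P Q ≤ ε)
    (hopt : ∀ Q' : 𝒳 → 𝒮 → 𝒴 → ℝ, IsRule Q' → ERMI P Q' ≤ ε → risk P Q ≤ risk P Q') :
    ∑ s, margS P s * TV (condYhatS P Q s) (condYS P smax)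
      ≤ (1 / 2 + 1 / (4 * δ)) * max ε (Real.sqrt ε) := by
  have hw0 : ∀ s, 0 ≤ margS P s := fun s => (hS s).le
  have hfairTV : ∑ s, margS P s * TV (condYhatS P Q s) (margYhat P Q) ≤ √ε / 2 :=
    (sum_margS_mul_TV_condYhatS_margYhat_le hP0 hP1 hS hQ).trans (by gcongr)
  have hcoupling : ERMI P (couplingRule P h smax) ≤ ε :=
    (ERMI_couplingRule hP0 hP1 hS hdet).trans_le ((ERMI_nonneg P Q).trans hfair)
  have hrisk : ∑ s, margS P s * TV (condYhatS P Q s) (condYS P s)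
      ≤ ∑ s, margS P s * TV (condYS P smax) (condYS P s) :=
    (sum_margS_mul_TV_condYhatS_condYS_le_risk hP0 hS hQ).trans
      ((hopt _ (isRule_couplingRule hP0 hS) hcoupling).trans (risk_couplingRule_le hP0 hS hdet))
  have hgap := two_mul_sub_one_mul_TV_le hw0 (sum_margS hP1) smax (condYS P) (condYhatS P Q)
    (margYhat P Q)
  have hbias : TV (margYhat P Q) (condYS P smax) ≤ √ε / (4 * δ) := by
    rw [le_div_iff₀ (by positivity)]
    rw [hsmax] at hgap
    linarith
  calc ∑ s, margS P s * TV (condYhatS P Q s) (condYS P smax)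
      ≤ √ε / 2 + √ε / (4 * δ) :=
        (sum_mul_TV_le_sum_mul_TV_add hw0 (sum_margS hP1) _ _ _).trans (add_le_add hfairTV hbias)
    _ = (1 / 2 + 1 / (4 * δ)) * √ε := by ring
    _ ≤ (1 / 2 + 1 / (4 * δ)) * max ε (Real.sqrt ε) := by gcongr; exact le_max_right _ _
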